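/- (Van Loan block-exponential integral formula) Let A and B be M×M real matrices and δ ≥ 0. Form the 2M×2M block matrix C = [[A, B], [0, A]]. Then the upper-right M×M block of exp(δ·C) equals ∫₀^δ exp((δ − x)·A) · B · exp(x·A) dx. -/

import Mathlib

/-!
Both sides of the block identity, as functions of `t`, solve `Y' = C Y` with `Y 0 = 1`. For the
right-hand side the point is that `F t = ∫₀ᵗ exp ((t - x) A) B exp (x A) dx` equals
`exp (t A) ∫₀ᵗ exp (-x A) B exp (x A) dx`, so `F' = A F + B exp (t A)`. Uniqueness holds because
`exp (-t C) Y t` has derivative zero.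
-/

open NormedSpace

section NormedAlgebra

variable {𝔸 : Type*} [NormedRing 𝔸] [NormedAlgebra ℝ 𝔸] [CompleteSpace 𝔸]

theorem exp_add_smul (a : 𝔸) (s t : ℝ) : exp ((s + t) • a) = exp (s • a) * exp (t • a) := by
  let +nondep : NormedAlgebra ℚ 𝔸 := .restrictScalars ℚ ℝ 𝔸
  rw [add_smul, exp_add_of_commute ((Commute.refl a).smul_left s |>.smul_right t)]

theorem exp_smul_mul_exp_neg_smul (a : 𝔸) (t : ℝ) : exp (t • a) * exp ((-t) • a) = 1 := by
  rw [← exp_add_smul, add_neg_cancel, zero_smul, exp_zero]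

theorem eq_exp_smul_of_hasDerivAt {Y : ℝ → 𝔸} {c : 𝔸} (hY : ∀ t, HasDerivAt Y (c * Y t) t)
    (hY₀ : Y 0 = 1) (t : ℝ) : Y t = exp (t • c) := by
  have hZ : ∀ s, HasDerivAt (fun s => exp ((-s) • c) * Y s) 0 s := by
    intro s
    have hE : HasDerivAt (fun s : ℝ => exp ((-s) • c)) ((-1 : ℝ) • (c * exp ((-s) • c))) s :=
      (hasDerivAt_exp_smul_const' c (-s)).scomp s (hasDerivAt_neg s)
    refine (hE.mul (hY s)).congr_deriv ?_
    rw [((Commute.refl c).smul_right (-s)).exp_right.eq]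
    simp [mul_assoc]
  have hconst : exp ((-t) • c) * Y t = 1 := by
    simpa [hY₀] using is_const_of_deriv_eq_zero (fun s => (hZ s).differentiableAt)
      (fun s => (hZ s).deriv) t 0
  calc Y t = exp (t • c) * (exp ((-t) • c) * Y t) := by
        rw [← mul_assoc, exp_smul_mul_exp_neg_smul, one_mul]
    _ = exp (t • c) := by rw [hconst, mul_one]

theorem continuous_exp_neg_smul_mul_mul_exp_smul (a b : 𝔸) :
    Continuous fun x : ℝ => exp ((-x) • a) * b * exp (x • a) := by
  let +nondep : NormedAlgebra ℚ 𝔸 := .restrictScalars ℚ ℝ 𝔸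
  fun_prop

theorem integral_exp_sub_smul_mul_mul_exp_smul (a b : 𝔸) (t : ℝ) :
    ∫ x in (0 : ℝ)..t, exp ((t - x) • a) * b * exp (x • a)
      = exp (t • a) * ∫ x in (0 : ℝ)..t, exp ((-x) • a) * b * exp (x • a) := by
  calc ∫ x in (0 : ℝ)..t, exp ((t - x) • a) * b * exp (x • a)
      = ∫ x in (0 : ℝ)..t, exp (t • a) * (exp ((-x) • a) * b * exp (x • a)) := by
        congr 1 with x
        rw [← mul_assoc, ← mul_assoc, sub_eq_add_neg, exp_add_smul]
    _ = _ := (ContinuousLinearMap.mul ℝ 𝔸 (exp (t • a))).intervalIntegral_comp_comm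
        ((continuous_exp_neg_smul_mul_mul_exp_smul a b).intervalIntegrable 0 t)

theorem hasDerivAt_integral_exp_sub_smul_mul_mul_exp_smul (a b : 𝔸) (t : ℝ) :
    HasDerivAt (fun t => ∫ x in (0 : ℝ)..t, exp ((t - x) • a) * b * exp (x • a))
      (a * (∫ x in (0 : ℝ)..t, exp ((t - x) • a) * b * exp (x • a)) + b * exp (t • a)) t := by
  simp_rw [integral_exp_sub_smul_mul_mul_exp_smul]
  have hG :=
    ((continuous_exp_neg_smul_mul_mul_exp_smul a b).integral_hasStrictDerivAt 0 t).hasDerivAt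
  refine ((hasDerivAt_exp_smul_const' a t).mul hG).congr_deriv ?_
  rw [← mul_assoc, ← mul_assoc, ← mul_assoc, exp_smul_mul_exp_neg_smul, one_mul, mul_assoc]

end NormedAlgebra

section Matrix

open scoped Matrix.Norms.Operator

theorem HasDerivAt.matrix_fromBlocks {𝕜 : Type*} [NontriviallyNormedField 𝕜] [CompleteSpace 𝕜]
    {l m n o : Type*} [Fintype l] [Fintype m] [Fintype n] [Fintype o]
    {A : 𝕜 → Matrix n l 𝕜} {B : 𝕜 → Matrix n m 𝕜} {C : 𝕜 → Matrix o l 𝕜}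
    {D : 𝕜 → Matrix o m 𝕜} {A' : Matrix n l 𝕜} {B' : Matrix n m 𝕜} {C' : Matrix o l 𝕜}
    {D' : Matrix o m 𝕜} {t : 𝕜} (hA : HasDerivAt A A' t) (hB : HasDerivAt B B' t)
    (hC : HasDerivAt C C' t) (hD : HasDerivAt D D' t) :
    HasDerivAt (fun t => Matrix.fromBlocks (A t) (B t) (C t) (D t))
      (Matrix.fromBlocks A' B' C' D') t := by
  let L : (Matrix n l 𝕜 × Matrix n m 𝕜) × (Matrix o l 𝕜 × Matrix o m 𝕜) →ₗ[𝕜]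
      Matrix (n ⊕ o) (l ⊕ m) 𝕜 :=
    { toFun := fun p => Matrix.fromBlocks p.1.1 p.1.2 p.2.1 p.2.2
      map_add' := fun p q => (Matrix.fromBlocks_add ..).symm
      map_smul' := fun c p => (Matrix.fromBlocks_smul ..).symm }
  exact L.toContinuousLinearMap.hasFDerivAt.comp_hasDerivAt t
    ((hA.prodMk hB).prodMk (hC.prodMk hD))

theorem Matrix.intervalIntegral_apply {m n : Type*} [Fintype m] [Fintype n]
    {f : ℝ → Matrix m n ℝ} (hf : Continuous f) (a b : ℝ) (i : m) (j : n) :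
    (∫ x in a..b, f x) i j = ∫ x in a..b, f x i j :=
  ((Matrix.entryLinearMap ℝ ℝ i j).toContinuousLinearMap.intervalIntegral_comp_comm
    (hf.intervalIntegrable a b)).symm

theorem Matrix.exp_smul_fromBlocks_zero₂₁ {n : Type*} [Fintype n] [DecidableEq n]
    (A B : Matrix n n ℝ) (t : ℝ) :
    exp (t • Matrix.fromBlocks A B 0 A)
      = Matrix.fromBlocks (exp (t • A))
          (∫ x in (0 : ℝ)..t, exp ((t - x) • A) * B * exp (x • A)) 0 (exp (t • A)) := by
  symm
  refine eq_exp_smul_of_hasDerivAt (Y := fun t => Matrix.fromBlocks (exp (t • A))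
    (∫ x in (0 : ℝ)..t, exp ((t - x) • A) * B * exp (x • A)) 0 (exp (t • A))) (fun s => ?_) ?_ t
  · refine (HasDerivAt.matrix_fromBlocks (hasDerivAt_exp_smul_const' A s)
      (hasDerivAt_integral_exp_sub_smul_mul_mul_exp_smul A B s) (hasDerivAt_const s 0)
      (hasDerivAt_exp_smul_const' A s)).congr_deriv ?_
    rw [Matrix.fromBlocks_multiply]
    simp only [Matrix.mul_zero, Matrix.zero_mul, add_zero, zero_add]
    -- equal up to unfolding the matrix operator-norm instances into the plain ring structure
    rfl
  · simp [Matrix.fromBlocks_one]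

end Matrix

theorem van_loan_block_exponential_general (M : ℕ) (A B : Matrix (Fin M) (Fin M) ℝ)
    (δ : ℝ) :
    ∀ i j : Fin M,
      exp (δ • (Matrix.fromBlocks A B 0 A)) (Sum.inl i) (Sum.inr j)
        = ∫ x in (0 : ℝ)..δ, (exp ((δ - x) • A) * B * exp (x • A)) i j := by
  intro i j
  open scoped Matrix.Norms.Operator in
  rw [Matrix.exp_smul_fromBlocks_zero₂₁, Matrix.fromBlocks_apply₁₂,
    Matrix.intervalIntegral_apply (by fun_prop)]

/-- Van Loan block-exponential integral formula: the upper-right block of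
exp(δ·[[A,B],[0,A]]) equals ∫₀^δ exp((δ−x)·A)·B·exp(x·A) dx. -/
theorem van_loan_block_exponential (M : ℕ) (A B : Matrix (Fin M) (Fin M) ℝ)
    (δ : ℝ) (hδ : 0 ≤ δ) :
    ∀ i j : Fin M,
      exp (δ • (Matrix.fromBlocks A B 0 A)) (Sum.inl i) (Sum.inr j)
        = ∫ x in (0 : ℝ)..δ, (exp ((δ - x) • A) * B * exp (x • A)) i j :=
  van_loan_block_exponential_general M A B δ
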